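/- arXiv:1112.3559 — 2 statements merged into one kernel-verified Lean document; each statement's English description precedes it below -/
import Mathlib

section
/- Let f : I → ℝ where I ⊆ ℝ is an interval, f three times differentiable on the interior I° with f''' integrable on [a,b], where a, b ∈ I° with a < b. Suppose |f'''| is convex on [a,b]. Then |∫_a^b f(x) dx − ((b−a)/6)·[f(a) + 4·f((a+b)/2) + f(b)]| ≤ ((b−a)^4/1152)·( |f'''(a)| + |f'''(b)| ). -/
open MeasureTheory Real Set

/-!
The Simpson error has the Peano-kernel representation
`∫ f - (b - a)/6 (f a + 4 f m + f b) = ∫_a^m K_a f‴ - ∫_b^m K_b f‴` with `m = (a + b)/2` and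
`K_c t = (t - c)² (m - t)/6`, obtained by integrating by parts three times on each half.
Convexity bounds `|f‴|` by its chord through `(a, |f‴ a|)` and `(b, |f‴ b|)`, which also makes the
(measurable) derivative `f‴` integrable. Integrating `|K_a|` against the chord gives
`(b - a)⁴ (7A + 3B)/11520` on `[a, m]`, and the reflection `t ↦ a + b - t` gives
`(b - a)⁴ (3A + 7B)/11520` on `[m, b]`.
-/

theorem intervalIntegral.integral_mul_deriv_three_eq_sub {u u₁ u₂ u₃ v v₁ v₂ v₃ : ℝ → ℝ} {x y : ℝ}
    (hu : ∀ t ∈ uIcc x y, HasDerivAt u (u₁ t) t) (hu₁ : ∀ t ∈ uIcc x y, HasDerivAt u₁ (u₂ t) t)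
    (hu₂ : ∀ t ∈ uIcc x y, HasDerivAt u₂ (u₃ t) t) (hv : ∀ t ∈ uIcc x y, HasDerivAt v (v₁ t) t)
    (hv₁ : ∀ t ∈ uIcc x y, HasDerivAt v₁ (v₂ t) t) (hv₂ : ∀ t ∈ uIcc x y, HasDerivAt v₂ (v₃ t) t)
    (hu₃ : IntervalIntegrable u₃ volume x y) (hv₃ : IntervalIntegrable v₃ volume x y) :
    ∫ t in x..y, u t * v₃ t =
      (u y * v₂ y - u₁ y * v₁ y + u₂ y * v y) - (u x * v₂ x - u₁ x * v₁ x + u₂ x * v x)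
        - ∫ t in x..y, u₃ t * v t := by
  have integrable {w w' : ℝ → ℝ} (hw : ∀ t ∈ uIcc x y, HasDerivAt w (w' t) t) :
      IntervalIntegrable w volume x y :=
    ContinuousOn.intervalIntegrable fun t ht ↦ (hw t ht).continuousAt.continuousWithinAt
  rw [integral_mul_deriv_eq_deriv_mul hu hv₂ (integrable hu₁) hv₃,
    integral_mul_deriv_eq_deriv_mul hu₁ hv₁ (integrable hu₂) (integrable hv₂),
    integral_mul_deriv_eq_deriv_mul hu₂ hv hu₃ (integrable hv₁)]
  ring

noncomputable def simpsonKernel (c m t : ℝ) : ℝ := (t - c) ^ 2 * (m - t) / 6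

theorem integral_simpsonKernel_mul_eq {f f₁ f₂ f₃ : ℝ → ℝ} {c m : ℝ}
    (hf : ∀ t ∈ uIcc c m, HasDerivAt f (f₁ t) t) (hf₁ : ∀ t ∈ uIcc c m, HasDerivAt f₁ (f₂ t) t)
    (hf₂ : ∀ t ∈ uIcc c m, HasDerivAt f₂ (f₃ t) t) (hf₃ : IntervalIntegrable f₃ volume c m) :
    ∫ t in c..m, simpsonKernel c m t * f₃ t =
      (∫ t in c..m, f t) - (m - c) / 3 * (f c + 2 * f m) + (m - c) ^ 2 / 6 * f₁ m := by
  have hk (t : ℝ) :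
      HasDerivAt (simpsonKernel c m) ((2 * (t - c) * (m - t) - (t - c) ^ 2) / 6) t :=
    ((((hasDerivAt_id' t).sub_const c).fun_pow 2).mul ((hasDerivAt_id' t).const_sub m)).div_const 6
      |>.congr_deriv (by ring)
  have hk₁ (t : ℝ) : HasDerivAt (fun t ↦ (2 * (t - c) * (m - t) - (t - c) ^ 2) / 6)
      ((m - t - 2 * (t - c)) / 3) t :=
    (((((hasDerivAt_id' t).sub_const c).const_mul 2).mul ((hasDerivAt_id' t).const_sub m)).sub
      (((hasDerivAt_id' t).sub_const c).fun_pow 2)).div_const 6 |>.congr_deriv (by ring)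
  have hk₂ (t : ℝ) : HasDerivAt (fun t ↦ (m - t - 2 * (t - c)) / 3) (-1) t :=
    (((hasDerivAt_id' t).const_sub m).sub
      (((hasDerivAt_id' t).sub_const c).const_mul 2)).div_const 3 |>.congr_deriv (by ring)
  rw [intervalIntegral.integral_mul_deriv_three_eq_sub (fun t _ ↦ hk t) (fun t _ ↦ hk₁ t)
    (fun t _ ↦ hk₂ t) hf hf₁ hf₂ intervalIntegrable_const hf₃]
  simp only [simpsonKernel, neg_one_mul, intervalIntegral.integral_neg]
  ring

theorem sub_simpson_eq_integral_simpsonKernel {f f₁ f₂ f₃ : ℝ → ℝ} {a b : ℝ}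
    (hf : ∀ t ∈ uIcc a b, HasDerivAt f (f₁ t) t) (hf₁ : ∀ t ∈ uIcc a b, HasDerivAt f₁ (f₂ t) t)
    (hf₂ : ∀ t ∈ uIcc a b, HasDerivAt f₂ (f₃ t) t) (hf₃ : IntervalIntegrable f₃ volume a b) :
    (∫ t in a..b, f t) - (b - a) / 6 * (f a + 4 * f ((a + b) / 2) + f b) =
      (∫ t in a..(a + b) / 2, simpsonKernel a ((a + b) / 2) t * f₃ t) -
        ∫ t in b..(a + b) / 2, simpsonKernel b ((a + b) / 2) t * f₃ t := by
  have hm : (a + b) / 2 ∈ uIcc a b := mem_uIcc.2 <| (le_total a b).imp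
    (fun h ↦ ⟨by linarith, by linarith⟩) fun h ↦ ⟨by linarith, by linarith⟩
  have hleft : uIcc a ((a + b) / 2) ⊆ uIcc a b := uIcc_subset_uIcc left_mem_uIcc hm
  have hright : uIcc b ((a + b) / 2) ⊆ uIcc a b := uIcc_subset_uIcc right_mem_uIcc hm
  have hf_int : ∀ x y, uIcc x y ⊆ uIcc a b → IntervalIntegrable f volume x y := fun x y hxy ↦
    ContinuousOn.intervalIntegrable fun t ht ↦ (hf t (hxy ht)).continuousAt.continuousWithinAt
  rw [integral_simpsonKernel_mul_eq (fun t ht ↦ hf t (hleft ht)) (fun t ht ↦ hf₁ t (hleft ht))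
      (fun t ht ↦ hf₂ t (hleft ht)) (hf₃.mono_set hleft),
    integral_simpsonKernel_mul_eq (fun t ht ↦ hf t (hright ht)) (fun t ht ↦ hf₁ t (hright ht))
      (fun t ht ↦ hf₂ t (hright ht)) (hf₃.mono_set hright),
    intervalIntegral.integral_symm ((a + b) / 2) b,
    ← intervalIntegral.integral_add_adjacent_intervals (hf_int _ _ hleft)
      ((hf_int _ _ hright).symm)]
  ring

theorem ConvexOn.le_chord {g : ℝ → ℝ} {a b t : ℝ} (hg : ConvexOn ℝ (Icc a b) g) (hab : a < b)
    (ht : t ∈ Icc a b) : g t ≤ ((b - t) * g a + (t - a) * g b) / (b - a) := by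
  have hba : 0 < b - a := sub_pos.2 hab
  have hcomb : (b - t) / (b - a) * a + (t - a) / (b - a) * b = t := by field_simp; ring
  have := hg.2 (left_mem_Icc.2 hab.le) (right_mem_Icc.2 hab.le)
    (div_nonneg (sub_nonneg.2 ht.2) hba.le) (div_nonneg (sub_nonneg.2 ht.1) hba.le)
    (by field_simp; ring)
  simp only [smul_eq_mul, hcomb] at this
  calc g t ≤ (b - t) / (b - a) * g a + (t - a) / (b - a) * g b := this
    _ = ((b - t) * g a + (t - a) * g b) / (b - a) := by ring

theorem integrableOn_Icc_of_convexOn_norm {E : Type*} [NormedAddCommGroup E] {g : ℝ → E}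
    {a b : ℝ} (hg : AEStronglyMeasurable g (volume.restrict (Icc a b)))
    (hconv : ConvexOn ℝ (Icc a b) fun x ↦ ‖g x‖) : IntegrableOn g (Icc a b) :=
  IntegrableOn.of_bound measure_Icc_lt_top hg (max ‖g a‖ ‖g b‖) <|
    ae_restrict_of_forall_mem measurableSet_Icc fun _ ht ↦
      hconv.le_max_of_mem_Icc (left_mem_Icc.2 (ht.1.trans ht.2))
        (right_mem_Icc.2 (ht.1.trans ht.2)) ht

theorem integral_simpsonKernel_mul_affine (c m α β : ℝ) :
    ∫ t in c..m, simpsonKernel c m t * (α + β * (t - c)) =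
      (m - c) ^ 4 * (α / 72 + β * (m - c) / 120) := by
  set h := m - c
  set p : ℝ → ℝ := fun s ↦ h * α / 6 * s ^ 2 + (h * β - α) / 6 * s ^ 3 + -β / 6 * s ^ 4
  have hshift (t : ℝ) : simpsonKernel c m t * (α + β * (t - c)) = p (t - c) := by
    simp only [simpsonKernel, h, p]; ring
  rw [intervalIntegral.integral_congr fun t _ ↦ hshift t,
    intervalIntegral.integral_comp_sub_right p, sub_self, intervalIntegral.integral_add,
    intervalIntegral.integral_add]
  · simp only [intervalIntegral.integral_const_mul, integral_pow]
    ring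
  all_goals exact Continuous.intervalIntegrable (by fun_prop) _ _


section ChordBound

variable {g : ℝ → ℝ} {a b A B : ℝ}

theorem abs_integral_simpsonKernel_mul_le (hab : a < b) (hg : IntervalIntegrable g volume a b)
    (hbound : ∀ t ∈ Icc a b, |g t| ≤ ((b - t) * A + (t - a) * B) / (b - a)) :
    |∫ t in a..(a + b) / 2, simpsonKernel a ((a + b) / 2) t * g t| ≤
      (b - a) ^ 4 * (7 * A + 3 * B) / 11520 := by
  set m := (a + b) / 2 with hm_def
  have hba : b - a ≠ 0 := sub_ne_zero.2 hab.ne'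
  have hm : a ≤ m := by linarith
  have hsub : Icc a m ⊆ Icc a b := Icc_subset_Icc_right (by linarith)
  have hk : ∀ t ∈ Icc a m, 0 ≤ simpsonKernel a m t := fun t ht ↦
    div_nonneg (mul_nonneg (sq_nonneg _) (sub_nonneg.2 ht.2)) (by norm_num)
  have hchord (t : ℝ) :
      ((b - t) * A + (t - a) * B) / (b - a) = A + (B - A) / (b - a) * (t - a) := by
    field_simp; ring
  have hkg : IntervalIntegrable (fun t ↦ simpsonKernel a m t * g t) volume a m :=
    (hg.mono_set (by rw [uIcc_of_le hm, uIcc_of_le hab.le]; exact hsub)).continuousOn_mul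
      (Continuous.continuousOn (by unfold simpsonKernel; fun_prop))
  calc |∫ t in a..m, simpsonKernel a m t * g t|
      ≤ ∫ t in a..m, |simpsonKernel a m t * g t| :=
        intervalIntegral.abs_integral_le_integral_abs hm
    _ ≤ ∫ t in a..m, simpsonKernel a m t * (A + (B - A) / (b - a) * (t - a)) := by
        refine intervalIntegral.integral_mono_on hm hkg.abs
          (Continuous.intervalIntegrable (by unfold simpsonKernel; fun_prop) _ _) fun t ht ↦ ?_
        rw [abs_mul, abs_of_nonneg (hk t ht), ← hchord]
        exact mul_le_mul_of_nonneg_left (hbound t (hsub ht)) (hk t ht)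
    _ = (b - a) ^ 4 * (7 * A + 3 * B) / 11520 := by
        rw [integral_simpsonKernel_mul_affine, hm_def]
        field_simp
        ring

theorem abs_integral_simpsonKernel_right_mul_le (hab : a < b) (hg : IntervalIntegrable g volume a b)
    (hbound : ∀ t ∈ Icc a b, |g t| ≤ ((b - t) * A + (t - a) * B) / (b - a)) :
    |∫ t in b..(a + b) / 2, simpsonKernel b ((a + b) / 2) t * g t| ≤
      (b - a) ^ 4 * (3 * A + 7 * B) / 11520 := by
  set m := (a + b) / 2 with hm_def
  have hreflect : ∫ t in b..m, simpsonKernel b m t * g t =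
      ∫ t in a..m, simpsonKernel a m t * g (a + b - t) := by
    have hk (t : ℝ) : simpsonKernel b m (a + b - t) = -simpsonKernel a m t := by
      simp only [simpsonKernel, hm_def]; ring
    calc ∫ t in b..m, simpsonKernel b m t * g t
        = -∫ t in m..b, simpsonKernel b m t * g t := intervalIntegral.integral_symm _ _
      _ = -∫ t in a..m, simpsonKernel b m (a + b - t) * g (a + b - t) := by
          rw [intervalIntegral.integral_comp_sub_left (fun t ↦ simpsonKernel b m t * g t)]
          congr 2 <;> ring
      _ = ∫ t in a..m, simpsonKernel a m t * g (a + b - t) := by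
          simp only [hk, neg_mul, intervalIntegral.integral_neg, neg_neg]
  rw [hreflect]
  have hreflected := abs_integral_simpsonKernel_mul_le (g := fun t ↦ g (a + b - t)) (A := B)
    (B := A) hab (by simpa using (hg.comp_sub_left (a + b)).symm) fun t ht ↦ ?_
  · convert hreflected using 1; ring
  · convert hbound (a + b - t) ⟨by linarith [ht.2], by linarith [ht.1]⟩ using 2; ring

end ChordBound

theorem simpson_convex_q_one_general (I : Set ℝ) (hI : I.OrdConnected) (f : ℝ → ℝ)
    (a b : ℝ) (ha : a ∈ interior I) (hb : b ∈ interior I) (hab : a < b)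
    (hd1 : ∀ x ∈ interior I, DifferentiableAt ℝ f x)
    (hd2 : ∀ x ∈ interior I, DifferentiableAt ℝ (deriv f) x)
    (hd3 : ∀ x ∈ interior I, DifferentiableAt ℝ (deriv (deriv f)) x)
    (hconv : ConvexOn ℝ (Set.Icc a b) fun x => |deriv (deriv (deriv f)) x|) :
    |(∫ x in a..b, f x) - (b - a) / 6 * (f a + 4 * f ((a + b) / 2) + f b)| ≤
      (b - a) ^ 4 / 1152 *
        (|deriv (deriv (deriv f)) a| + |deriv (deriv (deriv f)) b|) := by
  have hsub : uIcc a b ⊆ interior I := uIcc_of_le hab.le ▸ hI.interior.out ha hb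
  have hint : IntervalIntegrable (deriv (deriv (deriv f))) volume a b :=
    (intervalIntegrable_iff_integrableOn_Icc_of_le hab.le).2 <|
      integrableOn_Icc_of_convexOn_norm (measurable_deriv _).aestronglyMeasurable hconv
  have hbound (t : ℝ) (ht : t ∈ Icc a b) := hconv.le_chord hab ht
  rw [sub_simpson_eq_integral_simpsonKernel (fun t ht ↦ (hd1 t (hsub ht)).hasDerivAt)
    (fun t ht ↦ (hd2 t (hsub ht)).hasDerivAt) (fun t ht ↦ (hd3 t (hsub ht)).hasDerivAt) hint]
  calc _ ≤ _ := abs_sub _ _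
    _ ≤ _ := add_le_add (abs_integral_simpsonKernel_mul_le hab hint hbound)
      (abs_integral_simpsonKernel_right_mul_le hab hint hbound)
    _ = _ := by ring

theorem simpson_convex_q_one (I : Set ℝ) (hI : I.OrdConnected) (f : ℝ → ℝ)
    (a b : ℝ) (ha : a ∈ interior I) (hb : b ∈ interior I) (hab : a < b)
    (hd1 : ∀ x ∈ interior I, DifferentiableAt ℝ f x)
    (hd2 : ∀ x ∈ interior I, DifferentiableAt ℝ (deriv f) x)
    (hd3 : ∀ x ∈ interior I, DifferentiableAt ℝ (deriv (deriv f)) x)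
    (hint : IntegrableOn (deriv (deriv (deriv f))) (Set.Icc a b))
    (hconv : ConvexOn ℝ (Set.Icc a b) fun x => |deriv (deriv (deriv f)) x|) :
    |(∫ x in a..b, f x) - (b - a) / 6 * (f a + 4 * f ((a + b) / 2) + f b)| ≤
      (b - a) ^ 4 / 1152 *
        (|deriv (deriv (deriv f)) a| + |deriv (deriv (deriv f)) b|) :=
  simpson_convex_q_one_general I hI f a b ha hb hab hd1 hd2 hd3 hconv
end

section
/- Let f : I → ℝ where I ⊆ ℝ is an interval, with f''' absolutely continuous on the interior I°, a, b ∈ I° with a < b, and f''' integrable on [a,b]. If |f'''| is a P-convex function on [a,b], then |∫_a^b f(x) dx − ((b−a)/6)·[f(a) + 4·f((a+b)/2) + f(b)]| ≤ ((b−a)^4/1152)·( |f'''(a)| + |f'''((a+b)/2)| + |f'''(b)| ). -/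
open MeasureTheory Real Set

/-- A real function `g` is absolutely continuous on a set `s`. -/
def AbsolutelyContinuousOnReal (g : ℝ → ℝ) (s : Set ℝ) : Prop :=
  ∀ ε > (0 : ℝ), ∃ δ > (0 : ℝ), ∀ (n : ℕ) (u v : Fin n → ℝ),
    (∀ i, u i < v i ∧ Set.Icc (u i) (v i) ⊆ s) →
    (Pairwise fun i j => Disjoint (Set.Ioo (u i) (v i)) (Set.Ioo (u j) (v j))) →
    (∑ i, (v i - u i)) < δ → (∑ i, |g (v i) - g (u i)|) < ε

/-- `g` is `P`-convex on the set `A`: for all `x, y ∈ A` and `t ∈ [0,1]`,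
`g(tx + (1-t)y) ≤ g(x) + g(y)`. -/
def PConvexOn (A : Set ℝ) (g : ℝ → ℝ) : Prop :=
  ∀ x ∈ A, ∀ y ∈ A, ∀ t ∈ Set.Icc (0 : ℝ) 1, g (t * x + (1 - t) * y) ≤ g x + g y


/-!
Three integrations by parts against the Peano kernel of Simpson's rule, which is
`(x - a)² (a + b - 2x) / 12` on `[a, (a+b)/2]` and `(x - b)² (a + b - 2x) / 12` on `[(a+b)/2, b]`,
write the error as `X + Y`, the integrals of these kernels against `f'''` over the two halves.
Each kernel has `L¹` norm `(b - a)⁴ / 1152`. P-convexity of `|f'''|` bounds `|f'''|` on each half by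
the sum of its values at the two ends of that half, which alone would count the midpoint twice.
If `f'''` vanishes at some `p`, P-convexity between `p` and an endpoint bounds `|f'''|` on the half
away from `p` by the value at that endpoint only. Otherwise `f'''`, being a derivative, has the
Darboux property and hence a constant sign; as the two kernels have opposite signs, so do `X` and
`Y`, and `|X + Y| ≤ max |X| |Y|`.
-/

open intervalIntegral

theorem abs_add_le_of_mul_nonpos {x y r : ℝ} (hxy : x * y ≤ 0) (hx : |x| ≤ r) (hy : |y| ≤ r) :
    |x + y| ≤ r := by
  rw [abs_le] at *
  constructor <;> nlinarith

theorem PConvexOn.le_add_of_mem_uIcc {A : Set ℝ} {g : ℝ → ℝ} (hg : PConvexOn A g) {u v z : ℝ}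
    (hu : u ∈ A) (hv : v ∈ A) (hz : z ∈ uIcc u v) : g z ≤ g u + g v := by
  rw [← segment_eq_uIcc] at hz
  obtain ⟨θ, η, hθ, hη, hθη, rfl⟩ := hz
  obtain rfl : η = 1 - θ := by linarith
  exact hg u hu v hv θ ⟨hθ, by linarith⟩

theorem forall_pos_or_forall_neg_of_ordConnected_image {g : ℝ → ℝ} {s : Set ℝ}
    (hg : (g '' s).OrdConnected) (h0 : ∀ x ∈ s, g x ≠ 0) :
    (∀ x ∈ s, 0 < g x) ∨ ∀ x ∈ s, g x < 0 := by
  by_contra! h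
  obtain ⟨⟨x, hx, hgx⟩, y, hy, hgy⟩ := h
  obtain ⟨z, hz, hgz⟩ := hg.out (mem_image_of_mem g hx) (mem_image_of_mem g hy) ⟨hgx, hgy⟩
  exact h0 z hz hgz

theorem abs_integral_mul_le_integral_abs_mul {k g : ℝ → ℝ} {s t K : ℝ} (hst : s ≤ t)
    (hk : ContinuousOn k (Icc s t)) (hg : IntervalIntegrable g volume s t)
    (hK : ∀ x ∈ Icc s t, |g x| ≤ K) :
    |∫ x in s..t, k x * g x| ≤ (∫ x in s..t, |k x|) * K := by
  have hkg : IntervalIntegrable (fun x => k x * g x) volume s t :=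
    hg.continuousOn_mul (by rwa [uIcc_of_le hst])
  calc |∫ x in s..t, k x * g x| ≤ ∫ x in s..t, |k x * g x| := abs_integral_le_integral_abs hst
    _ ≤ ∫ x in s..t, |k x| * K :=
      integral_mono_on hst hkg.abs ((hk.abs.mul continuousOn_const).intervalIntegrable_of_Icc hst)
        fun x hx => by rw [abs_mul]; exact mul_le_mul_of_nonneg_left (hK x hx) (abs_nonneg _)
    _ = (∫ x in s..t, |k x|) * K := intervalIntegral.integral_mul_const _ _

section IntegrationByParts

variable {f f₁ f₂ f₃ u₀ u₁ u₂ : ℝ → ℝ} {s t c : ℝ}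

theorem integral_mul_third_deriv_eq (hu₀ : ∀ x, HasDerivAt u₀ (u₁ x) x)
    (hu₁ : ∀ x, HasDerivAt u₁ (u₂ x) x) (hu₂ : ∀ x, HasDerivAt u₂ c x)
    (hf : ∀ x ∈ uIcc s t, HasDerivAt f (f₁ x) x) (hf₁ : ∀ x ∈ uIcc s t, HasDerivAt f₁ (f₂ x) x)
    (hf₂ : ∀ x ∈ uIcc s t, HasDerivAt f₂ (f₃ x) x) (hf₃ : IntervalIntegrable f₃ volume s t) :
    ∫ x in s..t, u₀ x * f₃ x =
      u₀ t * f₂ t - u₀ s * f₂ s - (u₁ t * f₁ t - u₁ s * f₁ s) + (u₂ t * f t - u₂ s * f s)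
        - c * ∫ x in s..t, f x := by
  have hv_int {v v' : ℝ → ℝ} (hv : ∀ x ∈ uIcc s t, HasDerivAt v (v' x) x) :
      IntervalIntegrable v volume s t :=
    ContinuousOn.intervalIntegrable fun x hx => (hv x hx).continuousAt.continuousWithinAt
  have hu_int {v v' : ℝ → ℝ} (hv : ∀ x, HasDerivAt v (v' x) x) : IntervalIntegrable v volume s t :=
    (continuous_iff_continuousAt.2 fun x => (hv x).continuousAt).intervalIntegrable s t
  rw [integral_mul_deriv_eq_deriv_mul (fun x _ => hu₀ x) hf₂ (hu_int hu₁) hf₃,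
    integral_mul_deriv_eq_deriv_mul (fun x _ => hu₁ x) hf₁ (hu_int hu₂) (hv_int hf₂),
    integral_mul_deriv_eq_deriv_mul (fun x _ => hu₂ x) hf intervalIntegrable_const (hv_int hf₁),
    intervalIntegral.integral_const_mul]
  ring

end IntegrationByParts

section PeanoKernel

theorem hasDerivAt_peanoKernel (p w x : ℝ) :
    HasDerivAt (fun y => (y - p) ^ 2 * (w - 2 * y) / 12) ((x - p) * (w + p - 3 * x) / 6) x :=
  (((((hasDerivAt_id' x).sub_const p).fun_pow 2).fun_mul
    (((hasDerivAt_id' x).const_mul 2).const_sub w)).div_const 12).congr_deriv (by ring)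

theorem hasDerivAt_peanoKernel_deriv (p w x : ℝ) :
    HasDerivAt (fun y => (y - p) * (w + p - 3 * y) / 6) ((w + 4 * p - 6 * x) / 6) x :=
  ((((hasDerivAt_id' x).sub_const p).fun_mul
    (((hasDerivAt_id' x).const_mul 3).const_sub (w + p))).div_const 6).congr_deriv (by ring)

theorem hasDerivAt_peanoKernel_deriv_deriv (p w x : ℝ) :
    HasDerivAt (fun y => (w + 4 * p - 6 * y) / 6) (-1) x :=
  ((((hasDerivAt_id' x).const_mul 6).const_sub (w + 4 * p)).div_const 6).congr_deriv (by ring)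

variable {f f₁ f₂ f₃ g : ℝ → ℝ} {a b : ℝ}

theorem integral_sub_simpson_eq (hab : a ≤ b) (hf : ∀ x ∈ Icc a b, HasDerivAt f (f₁ x) x)
    (hf₁ : ∀ x ∈ Icc a b, HasDerivAt f₁ (f₂ x) x) (hf₂ : ∀ x ∈ Icc a b, HasDerivAt f₂ (f₃ x) x)
    (hf₃ : IntervalIntegrable f₃ volume a b) :
    (∫ x in a..b, f x) - (b - a) / 6 * (f a + 4 * f ((a + b) / 2) + f b) =
      (∫ x in a..(a + b) / 2, (x - a) ^ 2 * (a + b - 2 * x) / 12 * f₃ x) +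
        ∫ x in (a + b) / 2..b, (x - b) ^ 2 * (a + b - 2 * x) / 12 * f₃ x := by
  have hsub_left : uIcc a ((a + b) / 2) ⊆ Icc a b := by
    rw [uIcc_of_le (by linarith)]; exact Icc_subset_Icc le_rfl (by linarith)
  have hsub_right : uIcc ((a + b) / 2) b ⊆ Icc a b := by
    rw [uIcc_of_le (by linarith)]; exact Icc_subset_Icc (by linarith) le_rfl
  have hf₃_on : ∀ {s t}, uIcc s t ⊆ Icc a b → IntervalIntegrable f₃ volume s t := fun h =>
    hf₃.mono_set (by rwa [uIcc_of_le hab])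
  have hf_on : ∀ {s t}, uIcc s t ⊆ Icc a b → IntervalIntegrable f volume s t := fun h =>
    ContinuousOn.intervalIntegrable fun x hx => (hf x (h hx)).continuousAt.continuousWithinAt
  have ibp {s t} (p : ℝ) (h : uIcc s t ⊆ Icc a b) := integral_mul_third_deriv_eq
    (hasDerivAt_peanoKernel p (a + b)) (hasDerivAt_peanoKernel_deriv p (a + b))
    (hasDerivAt_peanoKernel_deriv_deriv p (a + b)) (fun x hx => hf x (h hx))
    (fun x hx => hf₁ x (h hx)) (fun x hx => hf₂ x (h hx)) (hf₃_on h)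
  rw [ibp a hsub_left, ibp b hsub_right,
    ← integral_add_adjacent_intervals (hf_on hsub_left) (hf_on hsub_right)]
  ring

theorem integral_abs_peanoKernel_left (hab : a ≤ b) :
    ∫ x in a..(a + b) / 2, |(x - a) ^ 2 * (a + b - 2 * x) / 12| = (b - a) ^ 4 / 1152 := by
  have hF : ∀ x ∈ uIcc a ((a + b) / 2),
      HasDerivAt (fun y => ((b - a) * (y - a) ^ 3 / 3 - (y - a) ^ 4 / 2) / 12)
        ((x - a) ^ 2 * (a + b - 2 * x) / 12) x := fun x _ =>
    ((((((hasDerivAt_id' x).sub_const a).fun_pow 3).const_mul (b - a)).div_const 3).fun_sub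
      ((((hasDerivAt_id' x).sub_const a).fun_pow 4).div_const 2)).div_const 12
      |>.congr_deriv (by ring)
  have hk : ∀ x ∈ uIcc a ((a + b) / 2),
      |(x - a) ^ 2 * (a + b - 2 * x) / 12| = (x - a) ^ 2 * (a + b - 2 * x) / 12 := by
    intro x hx
    rw [uIcc_of_le (by linarith)] at hx
    have : 0 ≤ a + b - 2 * x := by linarith [hx.2]
    exact abs_of_nonneg (by positivity)
  rw [integral_congr hk, integral_eq_sub_of_hasDerivAt hF (Continuous.intervalIntegrable
    (by fun_prop : Continuous fun x : ℝ => (x - a) ^ 2 * (a + b - 2 * x) / 12) _ _)]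
  ring

theorem integral_abs_peanoKernel_right :
    ∫ x in (a + b) / 2..b, |(x - b) ^ 2 * (a + b - 2 * x) / 12| =
      ∫ x in a..(a + b) / 2, |(x - a) ^ 2 * (a + b - 2 * x) / 12| := by
  have h := integral_comp_sub_left (a := a) (b := (a + b) / 2)
    (fun x => |(x - b) ^ 2 * (a + b - 2 * x) / 12|) (a + b)
  rw [show a + b - (a + b) / 2 = (a + b) / 2 by ring, show a + b - a = b by ring] at h
  rw [← h]
  refine integral_congr fun x _ => ?_
  rw [← abs_neg]
  ring_nf

theorem abs_integral_peanoKernel_left_mul_le (hab : a ≤ b)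
    (hg : IntervalIntegrable g volume a b) {K : ℝ}
    (hK : ∀ x ∈ Icc a ((a + b) / 2), |g x| ≤ K) :
    |∫ x in a..(a + b) / 2, (x - a) ^ 2 * (a + b - 2 * x) / 12 * g x| ≤
      (b - a) ^ 4 / 1152 * K := by
  rw [← integral_abs_peanoKernel_left hab]
  exact abs_integral_mul_le_integral_abs_mul (by linarith) (by fun_prop)
    (hg.mono_set (uIcc_subset_uIcc_left (mem_uIcc_of_le (by linarith) (by linarith)))) hK

theorem abs_integral_peanoKernel_right_mul_le (hab : a ≤ b)
    (hg : IntervalIntegrable g volume a b) {K : ℝ}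
    (hK : ∀ x ∈ Icc ((a + b) / 2) b, |g x| ≤ K) :
    |∫ x in (a + b) / 2..b, (x - b) ^ 2 * (a + b - 2 * x) / 12 * g x| ≤
      (b - a) ^ 4 / 1152 * K := by
  rw [← integral_abs_peanoKernel_left hab, ← integral_abs_peanoKernel_right]
  exact abs_integral_mul_le_integral_abs_mul (by linarith) (by fun_prop)
    (hg.mono_set (uIcc_subset_uIcc_right (mem_uIcc_of_le (by linarith) (by linarith)))) hK

theorem peanoKernel_integrals_mul_nonpos (hab : a ≤ b) (hg : ∀ x ∈ Icc a b, 0 ≤ g x) :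
    (∫ x in a..(a + b) / 2, (x - a) ^ 2 * (a + b - 2 * x) / 12 * g x) *
      (∫ x in (a + b) / 2..b, (x - b) ^ 2 * (a + b - 2 * x) / 12 * g x) ≤ 0 := by
  refine mul_nonpos_of_nonneg_of_nonpos (integral_nonneg (by linarith) fun x hx => ?_) ?_
  · have := hg x ⟨hx.1, by linarith [hx.2]⟩
    have : 0 ≤ a + b - 2 * x := by linarith [hx.2]
    positivity
  · rw [← neg_nonneg, ← intervalIntegral.integral_neg]
    refine integral_nonneg (by linarith) fun x hx => ?_
    have := mul_nonneg (mul_nonneg (sq_nonneg (x - b)) (by linarith [hx.1] : 0 ≤ 2 * x - (a + b)))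
      (hg x ⟨by linarith [hx.1], hx.2⟩)
    linarith

theorem abs_peanoKernel_integrals_add_le_of_eq_zero (hab : a ≤ b)
    (hg : IntervalIntegrable g volume a b) (hconv : PConvexOn (Icc a b) fun x => |g x|)
    {p : ℝ} (hp : p ∈ Icc a b) (hgp : g p = 0) :
    |(∫ x in a..(a + b) / 2, (x - a) ^ 2 * (a + b - 2 * x) / 12 * g x) +
        ∫ x in (a + b) / 2..b, (x - b) ^ 2 * (a + b - 2 * x) / 12 * g x| ≤
      (b - a) ^ 4 / 1152 * (|g a| + |g ((a + b) / 2)| + |g b|) := by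
  have hA : a ∈ Icc a b := ⟨le_rfl, hab⟩
  have hM : (a + b) / 2 ∈ Icc a b := ⟨by linarith, by linarith⟩
  have hB : b ∈ Icc a b := ⟨hab, le_rfl⟩
  have hzero {u z : ℝ} (hu : u ∈ Icc a b) (hz : z ∈ uIcc p u) : |g z| ≤ |g u| := by
    simpa [hgp] using hconv.le_add_of_mem_uIcc hp hu hz
  rcases le_total p ((a + b) / 2) with hpm | hmp
  · calc _ ≤ _ := abs_add_le _ _
      _ ≤ (b - a) ^ 4 / 1152 * (|g a| + |g ((a + b) / 2)|) + (b - a) ^ 4 / 1152 * |g b| :=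
        add_le_add
          (abs_integral_peanoKernel_left_mul_le hab hg fun x hx =>
            hconv.le_add_of_mem_uIcc hA hM (Icc_subset_uIcc hx))
          (abs_integral_peanoKernel_right_mul_le hab hg fun x hx =>
            hzero hB (Icc_subset_uIcc ⟨hpm.trans hx.1, hx.2⟩))
      _ = _ := by ring
  · calc _ ≤ _ := abs_add_le _ _
      _ ≤ (b - a) ^ 4 / 1152 * |g a| + (b - a) ^ 4 / 1152 * (|g ((a + b) / 2)| + |g b|) :=
        add_le_add
          (abs_integral_peanoKernel_left_mul_le hab hg fun x hx =>
            hzero hA (Icc_subset_uIcc' ⟨hx.1, hx.2.trans hmp⟩))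
          (abs_integral_peanoKernel_right_mul_le hab hg fun x hx =>
            hconv.le_add_of_mem_uIcc hM hB (Icc_subset_uIcc hx))
      _ = _ := by ring

theorem abs_peanoKernel_integrals_add_le_of_ne_zero (hab : a ≤ b)
    (hg : IntervalIntegrable g volume a b) (hconv : PConvexOn (Icc a b) fun x => |g x|)
    (hdarboux : (g '' Icc a b).OrdConnected) (h0 : ∀ x ∈ Icc a b, g x ≠ 0) :
    |(∫ x in a..(a + b) / 2, (x - a) ^ 2 * (a + b - 2 * x) / 12 * g x) +
        ∫ x in (a + b) / 2..b, (x - b) ^ 2 * (a + b - 2 * x) / 12 * g x| ≤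
      (b - a) ^ 4 / 1152 * (|g a| + |g ((a + b) / 2)| + |g b|) := by
  have hA : a ∈ Icc a b := ⟨le_rfl, hab⟩
  have hM : (a + b) / 2 ∈ Icc a b := ⟨by linarith, by linarith⟩
  have hB : b ∈ Icc a b := ⟨hab, le_rfl⟩
  have hXY := (forall_pos_or_forall_neg_of_ordConnected_image hdarboux h0).elim
    (fun hpos => peanoKernel_integrals_mul_nonpos hab fun x hx => (hpos x hx).le) fun hneg => by
      simpa using peanoKernel_integrals_mul_nonpos hab (g := -g) fun x hx =>
        (neg_pos.2 (hneg x hx)).le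
  refine abs_add_le_of_mul_nonpos hXY
    ((abs_integral_peanoKernel_left_mul_le hab hg fun x hx =>
      hconv.le_add_of_mem_uIcc hA hM (Icc_subset_uIcc hx)).trans ?_)
    ((abs_integral_peanoKernel_right_mul_le hab hg fun x hx =>
      hconv.le_add_of_mem_uIcc hM hB (Icc_subset_uIcc hx)).trans ?_) <;>
  exact mul_le_mul_of_nonneg_left (by linarith [abs_nonneg (g a), abs_nonneg (g b)]) (by positivity)

theorem abs_peanoKernel_integrals_add_le (hab : a ≤ b)
    (hg : IntervalIntegrable g volume a b) (hconv : PConvexOn (Icc a b) fun x => |g x|)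
    (hdarboux : (g '' Icc a b).OrdConnected) :
    |(∫ x in a..(a + b) / 2, (x - a) ^ 2 * (a + b - 2 * x) / 12 * g x) +
        ∫ x in (a + b) / 2..b, (x - b) ^ 2 * (a + b - 2 * x) / 12 * g x| ≤
      (b - a) ^ 4 / 1152 * (|g a| + |g ((a + b) / 2)| + |g b|) := by
  rcases em (∃ p ∈ Icc a b, g p = 0) with ⟨p, hp, hgp⟩ | hzero
  · exact abs_peanoKernel_integrals_add_le_of_eq_zero hab hg hconv hp hgp
  · exact abs_peanoKernel_integrals_add_le_of_ne_zero hab hg hconv hdarboux fun x hx hgx =>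
      hzero ⟨x, hx, hgx⟩

end PeanoKernel

theorem simpson_pconvex_general (I : Set ℝ) (hI : I.OrdConnected) (f : ℝ → ℝ)
    (a b : ℝ) (ha : a ∈ interior I) (hb : b ∈ interior I) (hab : a < b)
    (hd1 : ∀ x ∈ interior I, DifferentiableAt ℝ f x)
    (hd2 : ∀ x ∈ interior I, DifferentiableAt ℝ (deriv f) x)
    (hd3 : ∀ x ∈ interior I, DifferentiableAt ℝ (deriv (deriv f)) x)
    (hint : IntegrableOn (deriv (deriv (deriv f))) (Set.Icc a b))
    (hconv : PConvexOn (Set.Icc a b) fun x => |deriv (deriv (deriv f)) x|) :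
    |(∫ x in a..b, f x) - (b - a) / 6 * (f a + 4 * f ((a + b) / 2) + f b)| ≤
      (b - a) ^ 4 / 1152 *
        (|deriv (deriv (deriv f)) a| + |deriv (deriv (deriv f)) ((a + b) / 2)| +
          |deriv (deriv (deriv f)) b|) := by
  have hsub : Icc a b ⊆ interior I := hI.interior.out ha hb
  have hf₃ : IntervalIntegrable (deriv (deriv (deriv f))) volume a b :=
    IntegrableOn.intervalIntegrable (by rwa [uIcc_of_le hab.le])
  rw [integral_sub_simpson_eq hab.le (fun x hx => (hd1 x (hsub hx)).hasDerivAt)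
    (fun x hx => (hd2 x (hsub hx)).hasDerivAt) (fun x hx => (hd3 x (hsub hx)).hasDerivAt) hf₃]
  exact abs_peanoKernel_integrals_add_le hab.le hf₃ hconv
    (ordConnected_Icc.image_deriv fun x hx => hd3 x (hsub hx))

theorem simpson_pconvex (I : Set ℝ) (hI : I.OrdConnected) (f : ℝ → ℝ)
    (a b : ℝ) (ha : a ∈ interior I) (hb : b ∈ interior I) (hab : a < b)
    (hd1 : ∀ x ∈ interior I, DifferentiableAt ℝ f x)
    (hd2 : ∀ x ∈ interior I, DifferentiableAt ℝ (deriv f) x)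
    (hd3 : ∀ x ∈ interior I, DifferentiableAt ℝ (deriv (deriv f)) x)
    (hac : AbsolutelyContinuousOnReal (deriv (deriv (deriv f))) (interior I))
    (hint : IntegrableOn (deriv (deriv (deriv f))) (Set.Icc a b))
    (hconv : PConvexOn (Set.Icc a b) fun x => |deriv (deriv (deriv f)) x|) :
    |(∫ x in a..b, f x) - (b - a) / 6 * (f a + 4 * f ((a + b) / 2) + f b)| ≤
      (b - a) ^ 4 / 1152 *
        (|deriv (deriv (deriv f)) a| + |deriv (deriv (deriv f)) ((a + b) / 2)| +
          |deriv (deriv (deriv f)) b|) :=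
  simpson_pconvex_general I hI f a b ha hb hab hd1 hd2 hd3 hint hconv
end
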